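/- The BB method with special initialization converges exactly linearly but not superlinearly: for x_0 = A^{-1}(c + v_1 + v_n), the gradient norms satisfy ‖g_k‖ = √2 ((κ-1)/(κ+1))^k for all k ≥ 0, so lim_k ‖g_{k+1}‖/‖g_k‖ = (κ-1)/(κ+1) > 0 whenever λ_1 < λ_n. -/

import Mathlib

open Matrix

/-!
Starting from `g₀ = v₁ + vₙ`, every gradient is `ρᵏ v₁ + (-ρ)ᵏ vₙ` with `ρ = (λₙ - λ₁)/(λₙ + λ₁)`.
Such an equal-weight combination of the two extreme eigenvectors has Rayleigh quotient
`(λ₁ + λₙ)/2`, so the first step and every BB step equal `2/(λ₁ + λₙ)`, and `I - 2A/(λ₁ + λₙ)`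
multiplies the `v₁`-component by `ρ` and the `vₙ`-component by `-ρ`. Hence `‖gₖ‖ = √2 ρᵏ`,
and `ρ = (κ - 1)/(κ + 1)`.
-/

variable {ι : Type*} [Fintype ι]

theorem gradient_succ_eq_sub_smul_mulVec {A : Matrix ι ι ℝ} {c : ι → ℝ}
    {x g : ℕ → ι → ℝ} {α : ℕ → ℝ}
    (hg : ∀ k, g k = A *ᵥ x k - c) (hx : ∀ k, x (k + 1) = x k - α k • g k) (k : ℕ) :
    g (k + 1) = g k - α k • (A *ᵥ g k) := by
  simp only [hg, hx, mulVec_sub, mulVec_smul]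
  abel

section TwoEigenvectors

variable {A : Matrix ι ι ℝ} {l₁ lₙ : ℝ} {v₁ vₙ : ι → ℝ}

theorem dotProduct_smul_add_smul_of_orthonormal (hu₁ : v₁ ⬝ᵥ v₁ = 1) (huₙ : vₙ ⬝ᵥ vₙ = 1)
    (horth : v₁ ⬝ᵥ vₙ = 0) (a b a' b' : ℝ) :
    (a • v₁ + b • vₙ) ⬝ᵥ (a' • v₁ + b' • vₙ) = a * a' + b * b' := by
  have horth' : vₙ ⬝ᵥ v₁ = 0 := by rwa [dotProduct_comm]
  simp only [dotProduct_add, add_dotProduct, dotProduct_smul, smul_dotProduct, hu₁, huₙ, horth,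
    horth', smul_eq_mul]
  ring

theorem mulVec_smul_add_smul_of_eigen (hv₁ : A *ᵥ v₁ = l₁ • v₁) (hvₙ : A *ᵥ vₙ = lₙ • vₙ)
    (a b : ℝ) : A *ᵥ (a • v₁ + b • vₙ) = (l₁ * a) • v₁ + (lₙ * b) • vₙ := by
  rw [mulVec_add, mulVec_smul, mulVec_smul, hv₁, hvₙ, smul_smul, smul_smul, mul_comm a,
    mul_comm b]

theorem dotProduct_div_dotProduct_mulVec_of_sq_eq (hv₁ : A *ᵥ v₁ = l₁ • v₁)
    (hvₙ : A *ᵥ vₙ = lₙ • vₙ) (hu₁ : v₁ ⬝ᵥ v₁ = 1) (huₙ : vₙ ⬝ᵥ vₙ = 1) (horth : v₁ ⬝ᵥ vₙ = 0)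
    {a b : ℝ} (ha : a ≠ 0) (hab : b ^ 2 = a ^ 2) :
    (a • v₁ + b • vₙ) ⬝ᵥ (a • v₁ + b • vₙ) / ((a • v₁ + b • vₙ) ⬝ᵥ A *ᵥ (a • v₁ + b • vₙ))
      = 2 / (l₁ + lₙ) := by
  rw [mulVec_smul_add_smul_of_eigen hv₁ hvₙ,
    dotProduct_smul_add_smul_of_orthonormal hu₁ huₙ horth,
    dotProduct_smul_add_smul_of_orthonormal hu₁ huₙ horth]
  have ha2 : a ^ 2 ≠ 0 := pow_ne_zero 2 ha
  calc (a * a + b * b) / (a * (l₁ * a) + b * (lₙ * b))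
      = (2 * a ^ 2) / ((l₁ + lₙ) * a ^ 2) := by
        congr 1
        · linear_combination hab
        · linear_combination lₙ * hab
    _ = 2 / (l₁ + lₙ) := mul_div_mul_right _ _ ha2

theorem sub_smul_mulVec_smul_add_smul_of_eigen (hv₁ : A *ᵥ v₁ = l₁ • v₁)
    (hvₙ : A *ᵥ vₙ = lₙ • vₙ) (hsum : l₁ + lₙ ≠ 0) (a b : ℝ) :
    a • v₁ + b • vₙ - (2 / (l₁ + lₙ)) • (A *ᵥ (a • v₁ + b • vₙ))
      = ((lₙ - l₁) / (lₙ + l₁) * a) • v₁ + (-((lₙ - l₁) / (lₙ + l₁) * b)) • vₙ := by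
  rw [mulVec_smul_add_smul_of_eigen hv₁ hvₙ]
  have hsum' : lₙ + l₁ ≠ 0 := by rwa [add_comm]
  have h₁ : a - 2 / (l₁ + lₙ) * (l₁ * a) = (lₙ - l₁) / (lₙ + l₁) * a := by
    field_simp
    ring
  have hₙ : b - 2 / (l₁ + lₙ) * (lₙ * b) = -((lₙ - l₁) / (lₙ + l₁) * b) := by
    field_simp
    ring
  rw [← h₁, ← hₙ]
  module


theorem bb_gradient_eq_of_eigen {g : ℕ → ι → ℝ} {α : ℕ → ℝ}
    (hv₁ : A *ᵥ v₁ = l₁ • v₁) (hvₙ : A *ᵥ vₙ = lₙ • vₙ)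
    (hu₁ : v₁ ⬝ᵥ v₁ = 1) (huₙ : vₙ ⬝ᵥ vₙ = 1) (horth : v₁ ⬝ᵥ vₙ = 0)
    (hsum : l₁ + lₙ ≠ 0) (hne : l₁ ≠ lₙ)
    (hstep : ∀ k, g (k + 1) = g k - α k • (A *ᵥ g k)) (hg₀ : g 0 = v₁ + vₙ)
    (hα₀ : α 0 = (g 0 ⬝ᵥ g 0) / (g 0 ⬝ᵥ A *ᵥ g 0))
    (hα : ∀ k, α (k + 1) = (g k ⬝ᵥ g k) / (g k ⬝ᵥ A *ᵥ g k)) (k : ℕ) :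
    g k = ((lₙ - l₁) / (lₙ + l₁)) ^ k • v₁ + (-((lₙ - l₁) / (lₙ + l₁))) ^ k • vₙ := by
  set ρ := (lₙ - l₁) / (lₙ + l₁)
  have hρ : ρ ≠ 0 := div_ne_zero (sub_ne_zero.2 hne.symm) (by rwa [add_comm])
  have hrayleigh : ∀ j, (ρ ^ j • v₁ + (-ρ) ^ j • vₙ) ⬝ᵥ (ρ ^ j • v₁ + (-ρ) ^ j • vₙ) /
      ((ρ ^ j • v₁ + (-ρ) ^ j • vₙ) ⬝ᵥ A *ᵥ (ρ ^ j • v₁ + (-ρ) ^ j • vₙ)) = 2 / (l₁ + lₙ) :=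
    fun j ↦ dotProduct_div_dotProduct_mulVec_of_sq_eq hv₁ hvₙ hu₁ huₙ horth (pow_ne_zero j hρ)
      (by rw [← pow_mul, ← pow_mul, mul_comm, pow_mul, pow_mul, neg_sq])
  suffices h : g k = ρ ^ k • v₁ + (-ρ) ^ k • vₙ ∧ α k = 2 / (l₁ + lₙ) from h.1
  induction k with
  | zero =>
    have hg₀' : g 0 = ρ ^ 0 • v₁ + (-ρ) ^ 0 • vₙ := by simpa using hg₀
    exact ⟨hg₀', by rw [hα₀, hg₀', hrayleigh]⟩
  | succ k ih =>
    obtain ⟨hgk, hαk⟩ := ih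
    refine ⟨?_, by rw [hα, hgk, hrayleigh]⟩
    rw [hstep, hαk, hgk, sub_smul_mulVec_smul_add_smul_of_eigen hv₁ hvₙ hsum, pow_succ',
      pow_succ', neg_mul]

end TwoEigenvectors

theorem sqrt_dotProduct_pow_smul_add_neg_pow_smul {v₁ vₙ : ι → ℝ} (hu₁ : v₁ ⬝ᵥ v₁ = 1)
    (huₙ : vₙ ⬝ᵥ vₙ = 1) (horth : v₁ ⬝ᵥ vₙ = 0) {ρ : ℝ} (hρ : 0 ≤ ρ) (k : ℕ) :
    √((ρ ^ k • v₁ + (-ρ) ^ k • vₙ) ⬝ᵥ (ρ ^ k • v₁ + (-ρ) ^ k • vₙ)) = √2 * ρ ^ k := by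
  rw [dotProduct_smul_add_smul_of_orthonormal hu₁ huₙ horth, ← mul_pow, ← mul_pow, neg_mul_neg,
    ← two_mul, Real.sqrt_mul zero_le_two, mul_pow, Real.sqrt_mul_self (pow_nonneg hρ k)]

theorem tendsto_succ_div_of_eq_mul_pow {f : ℕ → ℝ} {C ρ : ℝ} (hC : C ≠ 0) (hρ : ρ ≠ 0)
    (hf : ∀ k, f k = C * ρ ^ k) :
    Filter.Tendsto (fun k ↦ f (k + 1) / f k) Filter.atTop (nhds ρ) := by
  have hconst : (fun k ↦ f (k + 1) / f k) = fun _ ↦ ρ := by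
    funext k
    rw [hf, hf, pow_succ, ← mul_assoc, mul_div_cancel_left₀ _ (mul_ne_zero hC (pow_ne_zero k hρ))]
  rw [hconst]
  exact tendsto_const_nhds

theorem div_sub_one_div_div_add_one {a b : ℝ} (ha : a ≠ 0) :
    (b / a - 1) / (b / a + 1) = (b - a) / (b + a) := by
  rw [div_sub_one ha, div_add_one ha, div_div_div_cancel_right₀ ha]

theorem bb_exact_linear_not_superlinear_general {n : ℕ}
    (A : Matrix (Fin n) (Fin n) ℝ) (c : Fin n → ℝ)
    (lam1 lamn : ℝ) (hlam1 : 0 < lam1) (hlt : lam1 < lamn)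
    (v1 vn : Fin n → ℝ)
    (hv1 : A.mulVec v1 = lam1 • v1) (hvn : A.mulVec vn = lamn • vn)
    (hu1 : v1 ⬝ᵥ v1 = 1) (hun : vn ⬝ᵥ vn = 1) (horth : v1 ⬝ᵥ vn = 0)
    (x g : ℕ → Fin n → ℝ) (α : ℕ → ℝ)
    (hg : ∀ k, g k = A.mulVec (x k) - c)
    (hx0 : A.mulVec (x 0) = c + v1 + vn)
    (hx : ∀ k, x (k + 1) = x k - α k • g k)
    (hα0 : α 0 = (g 0 ⬝ᵥ g 0) / (g 0 ⬝ᵥ A.mulVec (g 0)))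
    (hα : ∀ k, α (k + 1) = (g k ⬝ᵥ g k) / (g k ⬝ᵥ A.mulVec (g k))) :
    (∀ k, Real.sqrt (g k ⬝ᵥ g k) =
      Real.sqrt 2 * ((lamn / lam1 - 1) / (lamn / lam1 + 1)) ^ k) ∧
    Filter.Tendsto (fun k => Real.sqrt (g (k + 1) ⬝ᵥ g (k + 1)) / Real.sqrt (g k ⬝ᵥ g k))
      Filter.atTop (nhds ((lamn / lam1 - 1) / (lamn / lam1 + 1))) ∧
    0 < (lamn / lam1 - 1) / (lamn / lam1 + 1) := by
  have hρ : 0 < (lamn - lam1) / (lamn + lam1) := div_pos (by linarith) (by linarith)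
  have hg0 : g 0 = v1 + vn := by rw [hg, hx0, add_assoc, add_sub_cancel_left]
  have hnorm : ∀ k, √(g k ⬝ᵥ g k) = √2 * ((lamn - lam1) / (lamn + lam1)) ^ k := fun k ↦ by
    rw [bb_gradient_eq_of_eigen hv1 hvn hu1 hun horth (by linarith) hlt.ne
      (gradient_succ_eq_sub_smul_mulVec hg hx) hg0 hα0 hα k]
    exact sqrt_dotProduct_pow_smul_add_neg_pow_smul hu1 hun horth hρ.le k
  rw [div_sub_one_div_div_add_one hlam1.ne']
  exact ⟨hnorm, tendsto_succ_div_of_eq_mul_pow (by positivity) hρ.ne' hnorm, hρ⟩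

/-- The BB method with the special initialization x_0 = A⁻¹(c + v_1 + v_n)
converges exactly linearly but not superlinearly: ‖g_k‖ = √2 ((κ-1)/(κ+1))^k for all
k ≥ 0, so ‖g_{k+1}‖/‖g_k‖ → (κ-1)/(κ+1) > 0 whenever λ_1 < λ_n. -/
theorem bb_exact_linear_not_superlinear {n : ℕ}
    (A : Matrix (Fin n) (Fin n) ℝ) (hA : A.PosDef) (c : Fin n → ℝ)
    (lam1 lamn : ℝ) (hlam1 : 0 < lam1) (hlt : lam1 < lamn)
    (v1 vn : Fin n → ℝ)
    (hv1 : A.mulVec v1 = lam1 • v1) (hvn : A.mulVec vn = lamn • vn)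
    (hu1 : v1 ⬝ᵥ v1 = 1) (hun : vn ⬝ᵥ vn = 1) (horth : v1 ⬝ᵥ vn = 0)
    (x g : ℕ → Fin n → ℝ) (α : ℕ → ℝ)
    (hg : ∀ k, g k = A.mulVec (x k) - c)
    (hx0 : A.mulVec (x 0) = c + v1 + vn)
    (hx : ∀ k, x (k + 1) = x k - α k • g k)
    (hα0 : α 0 = (g 0 ⬝ᵥ g 0) / (g 0 ⬝ᵥ A.mulVec (g 0)))
    (hα : ∀ k, α (k + 1) = (g k ⬝ᵥ g k) / (g k ⬝ᵥ A.mulVec (g k))) :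
    (∀ k, Real.sqrt (g k ⬝ᵥ g k) =
      Real.sqrt 2 * ((lamn / lam1 - 1) / (lamn / lam1 + 1)) ^ k) ∧
    Filter.Tendsto (fun k => Real.sqrt (g (k + 1) ⬝ᵥ g (k + 1)) / Real.sqrt (g k ⬝ᵥ g k))
      Filter.atTop (nhds ((lamn / lam1 - 1) / (lamn / lam1 + 1))) ∧
    0 < (lamn / lam1 - 1) / (lamn / lam1 + 1) :=
  bb_exact_linear_not_superlinear_general A c lam1 lamn hlam1 hlt v1 vn hv1 hvn hu1 hun horth x g α
    hg hx0 hx hα0 hα
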